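/- arXiv:1603.09068 — 4 statements merged into one kernel-verified Lean document; each statement's English description precedes it below -/
import Mathlib

section
/- For every nonnegative integer n and every positive integer r, the coefficient of x^n in the formal power series x^{r²} / ((1−x)(1−x²)⋯(1−x^r)) equals the number of partitions of n into exactly r parts n = n1 + n2 + ... + nr with n1 > n2 > ... > nr ≥ 1 and n_i − n_{i+1} ≥ 2 for all 1 ≤ i ≤ r−1. -/
/-!
Subtracting the staircase `(2r-1, 2r-3, …, 3, 1)`, of total `r²`, from a partition into `r` parts
with gaps at least `2` leaves the excesses `g k ≥ 0` of its gaps over their minimum, and these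
are arbitrary. Conversely the partition is recovered as `f i = (2(r-i)-1) + g i + ⋯ + g (r-1)`,
so its size is `r² + ∑ (k+1) g k`: the `x^n` coefficient counts the `g : Fin r → ℕ` of weight
`n - r²`. On the generating-function side, `1/(1-x^s)` enumerates `ℕ` weighted by `j ↦ s j`, and
enumerators of weighted sets multiply along products with added weights, so
`1/((1-x)⋯(1-x^r))` enumerates `Fin r → ℕ` weighted by `g ↦ ∑ (k+1) g k`.
-/

open PowerSeries Finset

def fiberAddEquiv {α β : Type*} (u : α → ℕ) (v : β → ℕ) (n : ℕ) :
    {p : α × β // u p.1 + v p.2 = n} ≃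
      Σ ij : antidiagonal n, {a // u a = ij.1.1} × {b // v b = ij.1.2} where
  toFun p := ⟨⟨(u p.1.1, v p.1.2), mem_antidiagonal.2 p.2⟩, ⟨p.1.1, rfl⟩, ⟨p.1.2, rfl⟩⟩
  invFun q := ⟨(q.2.1, q.2.2), by rw [q.2.1.2, q.2.2.2]; exact mem_antidiagonal.1 q.1.2⟩
  left_inv _ := rfl
  right_inv := by
    rintro ⟨⟨⟨i, j⟩, h⟩, ⟨a, ha⟩, ⟨b, hb⟩⟩
    dsimp only at ha hb
    subst ha hb
    rfl

instance finite_fiber_add {α β : Type*} {u : α → ℕ} {v : β → ℕ} [∀ n, Finite {a // u a = n}]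
    [∀ n, Finite {b // v b = n}] (n : ℕ) :
    Finite {p : α × β // u p.1 + v p.2 = n} :=
  .of_equiv _ (fiberAddEquiv u v n).symm

lemma subsingleton_fiber_mul_left {s : ℕ} (hs : s ≠ 0) (n : ℕ) :
    Subsingleton {j // s * j = n} :=
  ⟨fun a b => Subtype.ext (mul_left_cancel₀ hs (a.2.trans b.2.symm))⟩

lemma card_fiber_mul_left {s : ℕ} (hs : s ≠ 0) (n : ℕ) :
    Nat.card {j // s * j = n} = if s ∣ n then 1 else 0 := by
  split_ifs with h
  · obtain ⟨q, rfl⟩ := h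
    exact Nat.card_eq_one_iff_exists.2 ⟨⟨q, rfl⟩, fun j => Subtype.ext (mul_left_cancel₀ hs j.2)⟩
  · exact Nat.card_eq_zero.2 (.inl ⟨fun j => h ⟨j.1, j.2.symm⟩⟩)

namespace PowerSeries

variable {R : Type*} [CommSemiring R] {α β : Type*}

/-- An infinite fibre contributes `0` (the junk value of `Nat.card`), hence the finiteness
assumptions below. -/
noncomputable def weightEnumerator (w : α → ℕ) : R⟦X⟧ :=
  mk fun n => (Nat.card {a // w a = n} : R)

@[simp]
lemma coeff_weightEnumerator (w : α → ℕ) (n : ℕ) :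
    coeff n (weightEnumerator (R := R) w) = Nat.card {a // w a = n} :=
  coeff_mk _ _

lemma weightEnumerator_comp_equiv (w : α → ℕ) (e : β ≃ α) :
    weightEnumerator (R := R) (w ∘ e) = weightEnumerator w := by
  ext n
  simp only [coeff_weightEnumerator]
  exact congrArg _ (Nat.card_congr (e.subtypeEquiv fun _ => Iff.rfl))

variable {u : α → ℕ} {v : β → ℕ}

lemma weightEnumerator_mul [∀ n, Finite {a // u a = n}] [∀ n, Finite {b // v b = n}] :
    weightEnumerator u * weightEnumerator v =
      weightEnumerator (R := R) fun p : α × β => u p.1 + v p.2 := by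
  ext n
  rw [coeff_mul, ← sum_coe_sort]
  simp only [coeff_weightEnumerator, Nat.card_congr (fiberAddEquiv u v n), Nat.card_sigma,
    Nat.card_prod]
  push_cast
  rfl

lemma weightEnumerator_const (k : ℕ) : weightEnumerator (fun _ : Unit => k) = (X : R⟦X⟧) ^ k := by
  ext n
  rw [coeff_weightEnumerator, coeff_X_pow]
  split_ifs with h
  · subst h
    simp
  · simp [Ne.symm h]

lemma X_pow_mul_weightEnumerator (k : ℕ) (w : α → ℕ) [∀ n, Finite {a // w a = n}] :
    X ^ k * weightEnumerator w = weightEnumerator (R := R) fun a => k + w a := by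
  rw [← weightEnumerator_const, weightEnumerator_mul,
    ← weightEnumerator_comp_equiv _ (Equiv.punitProd α).symm]
  rfl

lemma inv_one_sub_X_pow {K : Type*} [Field K] {s : ℕ} (hs : s ≠ 0) :
    (1 - X ^ s : K⟦X⟧)⁻¹ = weightEnumerator fun j : ℕ => s * j := by
  rw [inv_eq_iff_mul_eq_one (by simp [hs])]
  ext n
  rw [mul_sub, mul_one, map_sub, coeff_mul_X_pow', coeff_one]
  simp only [coeff_weightEnumerator, card_fiber_mul_left hs]
  rcases eq_or_ne n 0 with rfl | hn
  · simp [hs]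
  · by_cases hsn : s ≤ n
    · have : s ∣ n - s ↔ s ∣ n := Nat.dvd_sub_self_right.trans
        (or_iff_left_of_imp fun h => le_antisymm h hsn ▸ dvd_rfl)
      simp [hn, hsn, this]
    · simp [hn, hsn, Nat.not_dvd_of_pos_of_lt (Nat.pos_of_ne_zero hn) (not_le.1 hsn)]

end PowerSeries

namespace RogersRamanujan

variable {r : ℕ}

def weightedSum (g : Fin r → ℕ) : ℕ := ∑ k : Fin r, ((k : ℕ) + 1) * g k

lemma weightedSum_snoc (g : Fin r → ℕ) (j : ℕ) :
    weightedSum (Fin.snoc g j : Fin (r + 1) → ℕ) = (r + 1) * j + weightedSum g := by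
  simp [weightedSum, Fin.sum_univ_castSucc, add_comm]

instance finite_fiber_weightedSum (n : ℕ) : Finite {g : Fin r → ℕ // weightedSum g = n} := by
  refine Finite.of_injective (fun g i => (⟨g.1 i, ?_⟩ : Fin (n + 1))) fun g h hgh => ?_
  · calc g.1 i ≤ ((i : ℕ) + 1) * g.1 i := Nat.le_mul_of_pos_left _ i.succ_pos
      _ ≤ weightedSum g.1 := single_le_sum (f := fun k : Fin r => ((k : ℕ) + 1) * g.1 k)
          (fun _ _ => Nat.zero_le _) (mem_univ i)
      _ < n + 1 := by rw [g.2]; exact n.lt_succ_self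
  · exact Subtype.ext (funext fun i => congrArg Fin.val (congrFun hgh i))

lemma weightEnumerator_weightedSum {K : Type*} [Field K] (r : ℕ) :
    weightEnumerator (weightedSum (r := r)) = ∏ k ∈ range r, (1 - X ^ (k + 1) : K⟦X⟧)⁻¹ := by
  induction r with
  | zero =>
    ext n
    by_cases hn : n = 0 <;> simp [weightedSum, coeff_one, eq_comm, hn]
  | succ r ih =>
    have (n : ℕ) : Finite {j // (r + 1) * j = n} :=
      have := subsingleton_fiber_mul_left r.succ_ne_zero n
      inferInstance
    rw [prod_range_succ, ← ih, inv_one_sub_X_pow r.succ_ne_zero, mul_comm, weightEnumerator_mul,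
      ← weightEnumerator_comp_equiv _ (Fin.snocEquiv fun _ => ℕ)]
    congr
    funext p
    exact weightedSum_snoc p.2 p.1

def tailSum (g : Fin r → ℕ) (i : ℕ) : ℕ := ∑ k ∈ univ.filter fun k : Fin r => i ≤ k, g k

lemma tailSum_of_le (g : Fin r → ℕ) {i : ℕ} (h : r ≤ i) : tailSum g i = 0 :=
  sum_eq_zero fun k hk => absurd ((mem_filter.1 hk).2.trans_lt k.2) h.not_gt

lemma tailSum_eq_add (g : Fin r → ℕ) (i : Fin r) : tailSum g i = g i + tailSum g (i + 1) := by
  have : (univ.filter fun k : Fin r => (i : ℕ) ≤ k) =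
      insert i (univ.filter fun k : Fin r => (i : ℕ) + 1 ≤ k) := by
    ext k
    simp only [mem_filter, mem_univ, true_and, mem_insert, Fin.ext_iff]
    omega
  rw [tailSum, tailSum, this, sum_insert (by simp)]

lemma sum_tailSum (g : Fin r → ℕ) : ∑ i : Fin r, tailSum g i = weightedSum g := by
  simp only [tailSum, weightedSum, sum_filter]
  rw [sum_comm]
  refine sum_congr rfl fun k _ => ?_
  rw [← sum_filter, sum_const, smul_eq_mul, ← Fin.card_Iic k, ← filter_ge_eq_Iic]
  rfl

lemma sum_staircase (r : ℕ) : ∑ i : Fin r, (2 * (r - i) - 1) = r ^ 2 := by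
  induction r with
  | zero => rfl
  | succ r ih =>
    rw [Fin.sum_univ_succ]
    simp only [Fin.val_zero, Fin.val_succ, Nat.add_sub_add_right, ih]
    ring_nf
    omega

def gapBound (f : Fin r → ℕ) (k : Fin r) : ℕ :=
  if h : (k : ℕ) + 1 < r then f ⟨k + 1, h⟩ + 2 else 1

def gapExcess (f : Fin r → ℕ) (k : Fin r) : ℕ := f k - gapBound f k

def gapSeq (g : Fin r → ℕ) (i : Fin r) : ℕ := 2 * (r - i) - 1 + tailSum g i

lemma gapSeq_eq_add_gapBound (g : Fin r → ℕ) (k : Fin r) :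
    gapSeq g k = g k + gapBound (gapSeq g) k := by
  unfold gapSeq gapBound
  rw [tailSum_eq_add]
  split_ifs with h
  · dsimp only
    omega
  · rw [tailSum_of_le g (by omega)]
    omega

lemma sum_gapSeq (g : Fin r → ℕ) : ∑ i, gapSeq g i = r ^ 2 + weightedSum g := by
  simp only [gapSeq, sum_add_distrib, sum_staircase, sum_tailSum]

lemma gapped_iff {f : Fin r → ℕ} :
    ((∀ i : Fin r, 1 ≤ f i) ∧ ∀ i : Fin r, ∀ h : (i : ℕ) + 1 < r, f ⟨i + 1, h⟩ + 2 ≤ f i) ↔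
      ∀ k, gapBound f k ≤ f k := by
  unfold gapBound
  constructor
  · rintro ⟨hpos, hgap⟩ k
    split_ifs with h
    exacts [hgap k h, hpos k]
  · intro hf
    refine ⟨fun i => ?_, fun i h => by simpa [h] using hf i⟩
    have := hf i
    split_ifs at this <;> omega

lemma gapExcess_gapSeq (g : Fin r → ℕ) : gapExcess (gapSeq g) = g := by
  funext k
  rw [gapExcess, gapSeq_eq_add_gapBound g k, Nat.add_sub_cancel]

lemma gapSeq_gapExcess {f : Fin r → ℕ} (hf : ∀ k, gapBound f k ≤ f k) :
    gapSeq (gapExcess f) = f := by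
  suffices h : ∀ k (hkr : k ≤ r) (hk : k < r), gapSeq (gapExcess f) ⟨k, hk⟩ = f ⟨k, hk⟩ from
    funext fun k => h k k.2.le k.2
  intro k hkr
  induction hkr using Nat.decreasingInduction with
  | self => exact fun h => absurd h (lt_irrefl r)
  | of_succ k _ ih =>
    intro hk
    have : gapBound (gapSeq (gapExcess f)) ⟨k, hk⟩ = gapBound f ⟨k, hk⟩ := by
      unfold gapBound
      split_ifs with h
      · rw [ih h]
      · rfl
    rw [gapSeq_eq_add_gapBound, this, gapExcess, Nat.sub_add_cancel (hf _)]

lemma gapBound_gapSeq_le (g : Fin r → ℕ) (k : Fin r) : gapBound (gapSeq g) k ≤ gapSeq g k := by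
  rw [gapSeq_eq_add_gapBound g k]
  exact Nat.le_add_left _ _

def gapSeqEquiv (n : ℕ) :
    {g : Fin r → ℕ // r ^ 2 + weightedSum g = n} ≃
      {f : Fin r → ℕ // (∀ i : Fin r, 1 ≤ f i) ∧
        (∀ i : Fin r, ∀ h : (i : ℕ) + 1 < r, f ⟨(i : ℕ) + 1, h⟩ + 2 ≤ f i) ∧ ∑ i, f i = n} where
  toFun g := ⟨gapSeq g, and_assoc.1
    ⟨gapped_iff.2 (gapBound_gapSeq_le g.1), (sum_gapSeq g.1).trans g.2⟩⟩
  invFun f := ⟨gapExcess f, by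
    rw [← sum_gapSeq, gapSeq_gapExcess (gapped_iff.1 ⟨f.2.1, f.2.2.1⟩), f.2.2.2]⟩
  left_inv g := Subtype.ext (gapExcess_gapSeq g.1)
  right_inv f := Subtype.ext (gapSeq_gapExcess (gapped_iff.1 ⟨f.2.1, f.2.2.1⟩))

end RogersRamanujan

theorem rr_coefficient_general (r n : ℕ) :
    (PowerSeries.coeff (R := ℚ) n)
        ((PowerSeries.X : PowerSeries ℚ) ^ (r ^ 2) *
          ∏ k ∈ Finset.range r, (1 - (PowerSeries.X : PowerSeries ℚ) ^ (k + 1))⁻¹) =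
      (Nat.card {f : Fin r → ℕ //
          (∀ i : Fin r, 1 ≤ f i) ∧
          (∀ i : Fin r, ∀ h : (i : ℕ) + 1 < r, f ⟨(i : ℕ) + 1, h⟩ + 2 ≤ f i) ∧
          ∑ i, f i = n} : ℚ) := by
  rw [← RogersRamanujan.weightEnumerator_weightedSum, X_pow_mul_weightEnumerator,
    coeff_weightEnumerator, Nat.card_congr (RogersRamanujan.gapSeqEquiv n)]

/-- The coefficient of `x^n` in `x^(r²) / ((1−x)(1−x²)⋯(1−x^r))` equals the
number of partitions of `n` into exactly `r` parts `n₁ > n₂ > ... > n_r ≥ 1`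
with consecutive differences at least `2`. -/
theorem rr_coefficient (r n : ℕ) (hr : 1 ≤ r) :
    (PowerSeries.coeff (R := ℚ) n)
        ((PowerSeries.X : PowerSeries ℚ) ^ (r ^ 2) *
          ∏ k ∈ Finset.range r, (1 - (PowerSeries.X : PowerSeries ℚ) ^ (k + 1))⁻¹) =
      (Nat.card {f : Fin r → ℕ //
          (∀ i : Fin r, 1 ≤ f i) ∧
          (∀ i : Fin r, ∀ h : (i : ℕ) + 1 < r, f ⟨(i : ℕ) + 1, h⟩ + 2 ≤ f i) ∧
          ∑ i, f i = n} : ℚ) :=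
  rr_coefficient_general r n
end

section
/- For every positive integer c, every nonnegative integer n, and every positive integer r, the coefficient of x^n in c^r · x^{r²} / ((1−x)(1−x²)⋯(1−x^r)) equals the number of pairs consisting of a partition of n into r parts with all consecutive differences at least 2 (and smallest part at least 1) together with a labeling of each of the r parts by an element of {1, 2, ..., c}. Consequently, Σ_{r≥0} c^r x^{r²}/((x;x)_r) is the generating function counting such c-colored gap-2 partitions (with the empty partition counted once for r = 0). -/
/-
`∏_{k ≤ r} (1 - x^k)⁻¹` counts the multiplicity vectors `f` of partitions of `m` into parts
`≤ r`, i.e. solutions of `∑ (i + 1) f_i = m`. The tail sums `λ_i = f_i + ⋯ + f_{r-1}` form the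
conjugate partition `λ_0 ≥ ⋯ ≥ λ_{r-1} ≥ 0`, and adding the staircase `2r - 1, …, 3, 1` (of total
`r²`) turns it bijectively into a gap-`2` partition of `m + r²` into exactly `r` parts. Colorings
contribute the factor `c^r`. Since a gap-`2` partition into `r` parts has size at least `r²`, only
`r ≤ n` contribute to the coefficient of `x^n`, so the sum over `r` is finite.
-/

open PowerSeries Finset

theorem Nat.card_preimage_snd {α β : Type*} (t : Set β) :
    Nat.card (Prod.snd ⁻¹' t : Set (α × β)) = Nat.card α * Nat.card t := by
  rw [← Set.univ_prod, Nat.card_congr (Equiv.Set.prod _ _), Nat.card_prod, Nat.card_univ]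

theorem Nat.card_sigma_mem_eq_sum {ι : Type*} {α : ι → Type*} (t : ∀ i, Set (α i))
    [∀ i, Finite (t i)] (s : Finset ι) (hs : ∀ i ∉ s, t i = ∅) :
    Nat.card {p : Σ i, α i // p.2 ∈ t p.1} = ∑ i ∈ s, Nat.card (t i) := by
  let e : {p : Σ i, α i // p.2 ∈ t p.1} ≃ Σ i : s, t i :=
    { toFun := fun p =>
        ⟨⟨p.1.1, by_contra fun h => by simpa [hs _ h] using p.2⟩, p.1.2, p.2⟩
      invFun := fun p => ⟨⟨p.1, p.2⟩, p.2.2⟩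
      left_inv := fun _ => rfl
      right_inv := fun _ => rfl }
  rw [Nat.card_congr e, Nat.card_sigma, sum_coe_sort s fun i => Nat.card (t i)]

theorem Fin.sum_two_mul_rev_add_one (r : ℕ) : ∑ i : Fin r, (2 * (i.rev : ℕ) + 1) = r ^ 2 := by
  calc ∑ i : Fin r, (2 * (i.rev : ℕ) + 1) = ∑ i : Fin r, (2 * (i : ℕ) + 1) :=
        Fintype.sum_equiv Fin.revPerm _ _ fun _ => rfl
    _ = ∑ i ∈ range r, (2 * i + 1) := Fin.sum_univ_eq_sum_range (fun i => 2 * i + 1) r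
    _ = r ^ 2 := by
      induction r with
      | zero => rfl
      | succ r ih => rw [sum_range_succ, ih]; ring

theorem PowerSeries.inv_one_sub_X_pow_s14 {K : Type*} [Field K] {k : ℕ} (hk : k ≠ 0) :
    (1 - X ^ k : K⟦X⟧)⁻¹ = mk fun m => if k ∣ m then 1 else 0 := by
  rw [PowerSeries.inv_eq_iff_mul_eq_one (by simp [hk])]
  ext m
  rw [mul_sub, mul_one, map_sub, coeff_mul_X_pow', coeff_one, coeff_mk]
  rcases Nat.eq_zero_or_pos m with rfl | hm
  · simp [hk]
  by_cases hkm : k ≤ m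
  · simp only [if_pos hkm, coeff_mk, if_neg hm.ne', Nat.dvd_sub_iff_left hkm dvd_rfl, sub_self]
  · have : ¬ k ∣ m := fun h => hkm (Nat.le_of_dvd hm h)
    simp [hkm, hm.ne', this]

theorem PowerSeries.coeff_prod_inv_one_sub_X_pow {ι K : Type*} [Fintype ι] [Field K]
    {w : ι → ℕ} (hw : ∀ i, w i ≠ 0) (m : ℕ) :
    coeff m (∏ i, (1 - X ^ w i : K⟦X⟧)⁻¹) =
      Nat.card {f : ι → ℕ // ∑ i, w i * f i = m} := by
  classical
  rw [prod_congr rfl fun i _ => inv_one_sub_X_pow_s14 (hw i), coeff_prod]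
  simp only [coeff_mk, prod_boole, mem_univ, true_imp_iff]
  rw [sum_boole]
  congr 1
  rw [← Nat.card_eq_finsetCard]
  refine Nat.card_congr
    { toFun := fun l => ⟨fun i => l.1 i / w i, ?_⟩
      invFun := fun f => ⟨Finsupp.equivFunOnFinite.symm fun i => w i * f.1 i, ?_⟩
      left_inv := ?_
      right_inv := ?_ }
  · obtain ⟨l, hl⟩ := l
    simp only [mem_filter, mem_finsuppAntidiag] at hl
    simpa [Nat.mul_div_cancel' (hl.2 _)] using hl.1.1
  · simp [f.2]
  · rintro ⟨l, hl⟩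
    simp only [mem_filter, mem_finsuppAntidiag] at hl
    ext i
    simp [Nat.mul_div_cancel' (hl.2 i)]
  · rintro ⟨f, hf⟩
    ext i
    simp [hw i]

def gapPartitions (r n : ℕ) : Set (Fin r → ℕ) :=
  {g | (∀ i : Fin r, 1 ≤ g i) ∧
    (∀ i : Fin r, ∀ h : (i : ℕ) + 1 < r, g ⟨(i : ℕ) + 1, h⟩ + 2 ≤ g i) ∧ ∑ i, g i = n}

namespace GapPartition

variable {r : ℕ}

def tailSum (f : Fin r → ℕ) (i : ℕ) : ℕ :=
  ∑ j ∈ univ.filter fun j : Fin r => i ≤ j, f j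

theorem tailSum_eq_add (f : Fin r → ℕ) {i : ℕ} (hi : i < r) :
    tailSum f i = f ⟨i, hi⟩ + tailSum f (i + 1) := by
  have : univ.filter (fun j : Fin r => i ≤ j) =
      insert ⟨i, hi⟩ (univ.filter fun j : Fin r => i + 1 ≤ j) := by
    ext j
    simp only [mem_filter, mem_univ, true_and, mem_insert, Fin.ext_iff]
    omega
  rw [tailSum, this, sum_insert (by simp), tailSum]

theorem tailSum_eq_zero (f : Fin r → ℕ) {i : ℕ} (hi : r ≤ i) : tailSum f i = 0 :=
  sum_eq_zero fun j hj => by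
    have := (mem_filter.1 hj).2
    omega

theorem sum_tailSum (f : Fin r → ℕ) :
    ∑ i : Fin r, tailSum f i = ∑ i : Fin r, ((i : ℕ) + 1) * f i := by
  simp only [tailSum, sum_filter]
  rw [sum_comm]
  refine sum_congr rfl fun j _ => ?_
  rw [← sum_filter, sum_const, smul_eq_mul]
  simp [filter_ge_eq_Iic]

def ofMultiplicities (f : Fin r → ℕ) (i : Fin r) : ℕ := tailSum f i + 2 * i.rev + 1

def multiplicities (g : Fin r → ℕ) (i : Fin r) : ℕ :=
  g i - if h : (i : ℕ) + 1 < r then g ⟨i + 1, h⟩ + 2 else 1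

theorem ofMultiplicities_eq_succ_add (f : Fin r → ℕ) (i : Fin r) (h : (i : ℕ) + 1 < r) :
    ofMultiplicities f i = ofMultiplicities f ⟨i + 1, h⟩ + 2 + f i := by
  simp only [ofMultiplicities, Fin.val_rev, tailSum_eq_add f i.2, Fin.eta]
  omega

theorem ofMultiplicities_of_last (f : Fin r → ℕ) (i : Fin r) (h : ¬ (i : ℕ) + 1 < r) :
    ofMultiplicities f i = 1 + f i := by
  simp only [ofMultiplicities, Fin.val_rev, tailSum_eq_add f i.2, Fin.eta,
    tailSum_eq_zero f (not_lt.1 h)]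
  omega

theorem sum_ofMultiplicities (f : Fin r → ℕ) :
    ∑ i, ofMultiplicities f i = ∑ i : Fin r, ((i : ℕ) + 1) * f i + r ^ 2 := by
  simp only [ofMultiplicities, add_assoc]
  rw [sum_add_distrib, sum_tailSum, Fin.sum_two_mul_rev_add_one]

theorem ofMultiplicities_mem (f : Fin r → ℕ) :
    ofMultiplicities f ∈ gapPartitions r (∑ i : Fin r, ((i : ℕ) + 1) * f i + r ^ 2) :=
  ⟨fun _ => by simp [ofMultiplicities],
    fun i h => by rw [ofMultiplicities_eq_succ_add f i h]; omega,
    sum_ofMultiplicities f⟩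

theorem multiplicities_ofMultiplicities (f : Fin r → ℕ) :
    multiplicities (ofMultiplicities f) = f := by
  funext i
  by_cases h : (i : ℕ) + 1 < r
  · rw [multiplicities, dif_pos h, ofMultiplicities_eq_succ_add f i h]; omega
  · rw [multiplicities, dif_neg h, ofMultiplicities_of_last f i h]; omega

theorem ofMultiplicities_multiplicities {g : Fin r → ℕ} (hpos : ∀ i : Fin r, 1 ≤ g i)
    (hgap : ∀ i : Fin r, ∀ h : (i : ℕ) + 1 < r, g ⟨(i : ℕ) + 1, h⟩ + 2 ≤ g i) :
    ofMultiplicities (multiplicities g) = g := by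
  suffices ∀ d (i : Fin r), (i : ℕ) + d + 1 = r →
      ofMultiplicities (multiplicities g) i = g i from
    funext fun i => this (r - 1 - i) i (by omega)
  intro d
  induction d with
  | zero =>
    intro i hi
    have h : ¬ (i : ℕ) + 1 < r := by omega
    rw [ofMultiplicities_of_last _ i h, multiplicities, dif_neg h]
    have := hpos i
    omega
  | succ d ih =>
    intro i hi
    have h : (i : ℕ) + 1 < r := by omega
    rw [ofMultiplicities_eq_succ_add _ i h, ih ⟨i + 1, h⟩ (by simp only; omega), multiplicities,
      dif_pos h]
    have := hgap i h
    omega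

theorem sq_le_of_mem_gapPartitions {g : Fin r → ℕ} {n : ℕ} (hg : g ∈ gapPartitions r n) :
    r ^ 2 ≤ n := by
  obtain ⟨hpos, hgap, hsum⟩ := hg
  calc r ^ 2 ≤ ∑ i : Fin r, ((i : ℕ) + 1) * multiplicities g i + r ^ 2 := Nat.le_add_left _ _
    _ = n := by rw [← sum_ofMultiplicities, ofMultiplicities_multiplicities hpos hgap, hsum]

end GapPartition

open GapPartition

def multiplicitiesEquivGapPartitions (r m : ℕ) :
    {f : Fin r → ℕ // ∑ i : Fin r, ((i : ℕ) + 1) * f i = m} ≃ gapPartitions r (m + r ^ 2) where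
  toFun f := ⟨ofMultiplicities f.1, by simpa only [f.2] using ofMultiplicities_mem f.1⟩
  invFun g := ⟨multiplicities g.1, by
    obtain ⟨hpos, hgap, hsum⟩ := g.2
    have := sum_ofMultiplicities (multiplicities g.1)
    rw [ofMultiplicities_multiplicities hpos hgap, hsum] at this
    omega⟩
  left_inv f := Subtype.ext (multiplicities_ofMultiplicities f.1)
  right_inv g := Subtype.ext (ofMultiplicities_multiplicities g.2.1 g.2.2.1)

theorem gapPartitions_eq_empty {r n : ℕ} (h : n < r ^ 2) : gapPartitions r n = ∅ :=
  Set.eq_empty_of_forall_notMem fun _ hg => (sq_le_of_mem_gapPartitions hg).not_gt h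

theorem coeff_X_pow_sq_mul_prod_inv_one_sub_X_pow (K : Type*) [Field K] (r n : ℕ) :
    coeff n (X ^ (r ^ 2) * ∏ k ∈ range r, (1 - X ^ (k + 1))⁻¹ : K⟦X⟧) =
      Nat.card (gapPartitions r n) := by
  rw [coeff_X_pow_mul']
  split_ifs with h
  · rw [← Fin.prod_univ_eq_prod_range (fun k => (1 - X ^ (k + 1) : K⟦X⟧)⁻¹),
      coeff_prod_inv_one_sub_X_pow fun i : Fin r => Nat.succ_ne_zero i,
      Nat.card_congr (multiplicitiesEquivGapPartitions r (n - r ^ 2)), Nat.sub_add_cancel h]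
  · simp [gapPartitions_eq_empty (not_le.1 h)]

theorem finite_gapPartitions (r n : ℕ) : (gapPartitions r n).Finite :=
  (Set.Finite.pi' fun _ : Fin r => Set.finite_Iic n).subset fun g hg i =>
    hg.2.2 ▸ single_le_sum (fun j _ => Nat.zero_le (g j)) (mem_univ i)

def coloredGapPartitions (c r n : ℕ) : Set ((Fin r → Fin c) × (Fin r → ℕ)) :=
  Prod.snd ⁻¹' gapPartitions r n

instance (c r n : ℕ) : Finite (coloredGapPartitions c r n) := by
  rw [coloredGapPartitions, ← Set.univ_prod]
  exact (Set.finite_univ.prod (finite_gapPartitions r n)).to_subtype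

theorem coloredGapPartitions_eq_empty {c r n : ℕ} (h : n < r ^ 2) :
    coloredGapPartitions c r n = ∅ := by
  rw [coloredGapPartitions, gapPartitions_eq_empty h, Set.preimage_empty]

theorem coeff_C_mul_X_pow_sq_mul_prod_inv_one_sub_X_pow (K : Type*) [Field K] (c r n : ℕ) :
    coeff n (C ((c : K) ^ r) * X ^ (r ^ 2) * ∏ k ∈ range r, (1 - X ^ (k + 1))⁻¹ : K⟦X⟧) =
      Nat.card (coloredGapPartitions c r n) := by
  rw [mul_assoc, coeff_C_mul, coeff_X_pow_sq_mul_prod_inv_one_sub_X_pow, coloredGapPartitions,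
    Nat.card_preimage_snd]
  simp

theorem colored_rr_coefficient_general (c : ℕ) (n : ℕ) :
    (∀ r : ℕ, 1 ≤ r →
      (PowerSeries.coeff (R := ℚ) n)
          (PowerSeries.C (R := ℚ) ((c : ℚ) ^ r) * PowerSeries.X ^ (r ^ 2) *
            ∏ k ∈ Finset.range r, (1 - (PowerSeries.X : PowerSeries ℚ) ^ (k + 1))⁻¹) =
        (Nat.card {p : (Fin r → Fin c) × (Fin r → ℕ) //
            (∀ i : Fin r, 1 ≤ p.2 i) ∧
            (∀ i : Fin r, ∀ h : (i : ℕ) + 1 < r, p.2 ⟨(i : ℕ) + 1, h⟩ + 2 ≤ p.2 i) ∧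
            ∑ i, p.2 i = n} : ℚ)) ∧
    (∑ᶠ r : ℕ,
        (PowerSeries.coeff (R := ℚ) n)
          (PowerSeries.C (R := ℚ) ((c : ℚ) ^ r) * PowerSeries.X ^ (r ^ 2) *
            ∏ k ∈ Finset.range r, (1 - (PowerSeries.X : PowerSeries ℚ) ^ (k + 1))⁻¹)) =
      (Nat.card {p : Σ r : ℕ, (Fin r → Fin c) × (Fin r → ℕ) //
          (∀ i : Fin p.1, 1 ≤ p.2.2 i) ∧
          (∀ i : Fin p.1, ∀ h : (i : ℕ) + 1 < p.1, p.2.2 ⟨(i : ℕ) + 1, h⟩ + 2 ≤ p.2.2 i) ∧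
          ∑ i, p.2.2 i = n} : ℚ) := by
  refine ⟨fun r _ => coeff_C_mul_X_pow_sq_mul_prod_inv_one_sub_X_pow ℚ c r n, ?_⟩
  have hempty : ∀ r ∉ range (n + 1), coloredGapPartitions c r n = ∅ := fun r hr =>
    coloredGapPartitions_eq_empty <|
      (show n < r by simpa using hr).trans_le (Nat.le_self_pow two_ne_zero r)
  simp_rw [coeff_C_mul_X_pow_sq_mul_prod_inv_one_sub_X_pow]
  rw [finsum_eq_sum_of_support_subset (s := range (n + 1)) _ fun r hr => ?_, ← Nat.cast_sum,
    ← Nat.card_sigma_mem_eq_sum _ _ hempty]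
  · rfl -- both subtypes unfold to the same predicate
  · by_contra h
    exact hr (by simp [hempty r h])

/-- The coefficient of `x^n` in `c^r · x^(r²) / ((1−x)(1−x²)⋯(1−x^r))` counts
`c`-colored gap-`2` partitions of `n` into exactly `r` parts: pairs of a
partition `n₁ > ... > n_r ≥ 1` with consecutive differences at least `2`
summing to `n`, together with a labeling of the `r` parts by `{1, ..., c}`.
Consequently `Σ_{r≥0} c^r x^(r²)/((x;x)_r)` is the generating function for all
`c`-colored gap-`2` partitions (the empty partition counted once for `r = 0`). -/
theorem colored_rr_coefficient (c : ℕ) (hc : 1 ≤ c) (n : ℕ) :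
    (∀ r : ℕ, 1 ≤ r →
      (PowerSeries.coeff (R := ℚ) n)
          (PowerSeries.C (R := ℚ) ((c : ℚ) ^ r) * PowerSeries.X ^ (r ^ 2) *
            ∏ k ∈ Finset.range r, (1 - (PowerSeries.X : PowerSeries ℚ) ^ (k + 1))⁻¹) =
        (Nat.card {p : (Fin r → Fin c) × (Fin r → ℕ) //
            (∀ i : Fin r, 1 ≤ p.2 i) ∧
            (∀ i : Fin r, ∀ h : (i : ℕ) + 1 < r, p.2 ⟨(i : ℕ) + 1, h⟩ + 2 ≤ p.2 i) ∧
            ∑ i, p.2 i = n} : ℚ)) ∧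
    (∑ᶠ r : ℕ,
        (PowerSeries.coeff (R := ℚ) n)
          (PowerSeries.C (R := ℚ) ((c : ℚ) ^ r) * PowerSeries.X ^ (r ^ 2) *
            ∏ k ∈ Finset.range r, (1 - (PowerSeries.X : PowerSeries ℚ) ^ (k + 1))⁻¹)) =
      (Nat.card {p : Σ r : ℕ, (Fin r → Fin c) × (Fin r → ℕ) //
          (∀ i : Fin p.1, 1 ≤ p.2.2 i) ∧
          (∀ i : Fin p.1, ∀ h : (i : ℕ) + 1 < p.1, p.2.2 ⟨(i : ℕ) + 1, h⟩ + 2 ≤ p.2.2 i) ∧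
          ∑ i, p.2.2 i = n} : ℚ) :=
  colored_rr_coefficient_general c n
end

section
/- In the setting of Lemma 2.5 (Li's compatibility induction): suppose A ∈ Hom(L, L((z1))((z2, ..., z_{m+1}))) and B ∈ Hom(L, L((z2))((z1, z3, ..., z_{m+1}))) are equal as series (A = B in Hom(L, L[[z1^{±1}, ..., z_{m+1}^{±1}]])). Then A = B lies in Hom(L, L((z1, z2, ..., z_{m+1}))); that is, an operator-valued series that is simultaneously lower truncated in the iterated sense from two different variable orders with disjoint leading variables is lower truncated jointly in all variables. -/
/-! The uniform bound of `IterTrunc k` controls every variable except `z_k`, and that of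
`IterTrunc l` every variable except `z_l`; for `k ≠ l` each variable is controlled by one of
them, so the smaller of the two bounds works for all variables at once. -/

/-- A multivariable operator-valued series (modeled by its coefficient
function `f : (Fin n → ℤ) → M`) lies in `L((z_k))((other variables))` iff:
the exponents of the variables other than `z_k` are uniformly bounded below,
and for each fixed choice of those exponents the exponent of `z_k` is bounded
below. -/
def IterTrunc {n : ℕ} {M : Type*} [AddCommGroup M] (k : Fin n)
    (f : (Fin n → ℤ) → M) : Prop :=
  (∃ N : ℤ, ∀ e : Fin n → ℤ, (∃ i, i ≠ k ∧ e i < N) → f e = 0) ∧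
  ∀ e : Fin n → ℤ, ∃ N : ℤ, ∀ e' : Fin n → ℤ,
    (∀ i, i ≠ k → e' i = e i) → e' k < N → f e' = 0

theorem IterTrunc.exists_joint_bound {n : ℕ} {M : Type*} [AddCommGroup M] {k l : Fin n}
    {f : (Fin n → ℤ) → M} (hkl : k ≠ l) (hk : IterTrunc k f) (hl : IterTrunc l f) :
    ∃ N : ℤ, ∀ e : Fin n → ℤ, (∃ i, e i < N) → f e = 0 := by
  obtain ⟨Nk, hNk⟩ := hk.1
  obtain ⟨Nl, hNl⟩ := hl.1
  refine ⟨min Nk Nl, fun e ⟨i, hi⟩ => ?_⟩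
  rcases eq_or_ne i k with rfl | hik
  · exact hNl e ⟨i, hkl, hi.trans_le (min_le_right _ _)⟩
  · exact hNk e ⟨i, hik, hi.trans_le (min_le_left _ _)⟩

/-- Li's compatibility induction step: a series in the variables
`z₁, ..., z_{m+1}` (with `m ≥ 1`) that lies simultaneously in
`Hom(L, L((z₁))((z₂, ..., z_{m+1})))` and in
`Hom(L, L((z₂))((z₁, z₃, ..., z_{m+1})))` lies in
`Hom(L, L((z₁, z₂, ..., z_{m+1})))`, i.e. is jointly lower truncated in all
variables. -/
theorem joint_truncation (m : ℕ) (hm : 1 ≤ m)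
    (M : Type*) [AddCommGroup M]
    (f : (Fin (m + 1) → ℤ) → M)
    (h1 : IterTrunc (0 : Fin (m + 1)) f)
    (h2 : IterTrunc (1 : Fin (m + 1)) f) :
    ∃ N : ℤ, ∀ e : Fin (m + 1) → ℤ, (∃ i, e i < N) → f e = 0 := by
  obtain ⟨m, rfl⟩ := Nat.exists_eq_add_of_le' hm
  exact h1.exists_joint_bound Fin.zero_ne_one h2
end

section
/- Independence of the defining polynomial (Proposition 2.8, abstracted): let L be a vector space over 𝔽 ⊇ ℂ(q), let F(z1, z) ∈ Hom(L, L[[z1^{±1}, z^{±1}]]), and let p1, p2 ∈ 𝔽(q)[w] satisfy p1(1) = p2(1) = 1, p_k(q^n) ≠ 0 for all n ≥ 0, and p_k(z/z1)·F(z1, z) ∈ Hom(L, L((z1, z))) for k = 1, 2. Then the substituted series satisfy lim_{z1→z} p1(z/z1) F(z1,z) = lim_{z1→z} p2(z/z1) F(z1,z), where lim_{z1→z} denotes substitution z1 = z (well defined on Hom(L, L((z1,z)))). -/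
/-- The indeterminate `q`, realized as the generator of the field `ℂ(q)`. -/
noncomputable def qq : RatFunc ℂ := RatFunc.X

/- Series `F(z1, z) ∈ Hom(L, L[[z1^{±1}, z^{±1}]])` are modeled by coefficient
functions `f : ℤ → ℤ → M` (first index for `z1`, second for `z`). -/

/-- Multiplication by `p(z/z1)` for a polynomial `p`: since
`p(z/z1) = Σ_k c_k z^k z1^(−k)`, the coefficient of `z1^i z^j` in
`p(z/z1)·F` is `Σ_k c_k • F_{(i+k, j−k)}`. -/
noncomputable def pmul {K : Type*} [Field K] {M : Type*} [AddCommGroup M]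
    [Module K M] (p : Polynomial K) (f : ℤ → ℤ → M) : ℤ → ℤ → M :=
  fun i j => ∑ k ∈ Finset.range (p.natDegree + 1),
    p.coeff k • f (i + k) (j - k)

/-!
On the antidiagonal `i + j = n`, multiplication by `p(z/z1)` acts as `p(T)` for the shift
`T g = g(· + 1)`, and shifting does not change the sum of a finitely supported sequence, so
`Σ p(T) g = p(1) · Σ g`. As `p₁(T)` and `p₂(T)` commute,
`p₂(1) · Σ p₁(T) g = Σ p₂(T) p₁(T) g = Σ p₁(T) p₂(T) g = p₁(1) · Σ p₂(T) g`,
which needs only the two products, not `F` itself, to be truncated.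
-/

open Polynomial

namespace Polynomial

section Semiring

variable {R M : Type*} [Semiring R] [AddCommMonoid M] [Module R M]

noncomputable def evalShift (p : R[X]) (h : ℤ → M) : ℤ → M :=
  fun i => ∑ k ∈ Finset.range (p.natDegree + 1), p.coeff k • h (i + k)

theorem finsum_evalShift (p : R[X]) {h : ℤ → M} (hh : h.HasFiniteSupport) :
    ∑ᶠ i, evalShift p h i = p.eval 1 • ∑ᶠ i, h i := by
  have hshift (k : ℕ) : (fun i : ℤ => h (i + k)).HasFiniteSupport :=
    hh.fun_comp_of_injective (add_left_injective _)
  unfold evalShift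
  rw [eval_eq_sum_range, Finset.sum_smul, finsum_sum_comm _ (fun i k => p.coeff k • h (i + k))
    fun k _ => (hshift k).smul_right _]
  refine Finset.sum_congr rfl fun k _ => ?_
  rw [← smul_finsum' _ (hshift k), one_pow, mul_one]
  exact congrArg _ (finsum_comp_equiv (Equiv.addRight (k : ℤ)))

end Semiring

section CommSemiring

variable {R M : Type*} [CommSemiring R] [AddCommMonoid M] [Module R M]

theorem evalShift_comm (p q : R[X]) (h : ℤ → M) :
    evalShift p (evalShift q h) = evalShift q (evalShift p h) := by
  funext i
  simp only [evalShift, Finset.smul_sum, smul_smul]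
  rw [Finset.sum_comm]
  refine Finset.sum_congr rfl fun l _ => Finset.sum_congr rfl fun k _ => ?_
  rw [mul_comm, add_right_comm]

theorem eval_one_smul_finsum_evalShift_comm {p q : R[X]} {h : ℤ → M}
    (hp : (evalShift p h).HasFiniteSupport) (hq : (evalShift q h).HasFiniteSupport) :
    q.eval 1 • ∑ᶠ i, evalShift p h i = p.eval 1 • ∑ᶠ i, evalShift q h i := by
  rw [← finsum_evalShift q hp, ← finsum_evalShift p hq, evalShift_comm]

end CommSemiring

end Polynomial

theorem pmul_antidiagonal {K M : Type*} [Field K] [AddCommGroup M] [Module K M]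
    (p : K[X]) (f : ℤ → ℤ → M) (n i : ℤ) :
    pmul p f i (n - i) = evalShift p (fun i => f i (n - i)) i := by
  simp only [pmul, evalShift, sub_sub, add_comm i]

theorem hasFiniteSupport_antidiagonal_of_truncated {M : Type*} [Zero M] {g : ℤ → ℤ → M} {N : ℤ}
    (hg : ∀ i j, (i < N ∨ j < N) → g i j = 0) (n : ℤ) :
    (fun i => g i (n - i)).HasFiniteSupport := by
  refine (Set.finite_Icc N (n - N)).subset fun i hi => ?_
  by_contra hout
  rw [Set.mem_Icc, not_and_or, not_le, not_le] at hout
  exact hi (hg i (n - i) (by omega))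

theorem polynomial_independence_general
    (K : Type*) [Field K]
    (M : Type*) [AddCommGroup M] [Module K M]
    (f : ℤ → ℤ → M) (p1 p2 : Polynomial K)
    (h11 : p1.eval 1 = 1)
    (h21 : p2.eval 1 = 1)
    (ht1 : ∃ N : ℤ, ∀ i j : ℤ, (i < N ∨ j < N) → pmul p1 f i j = 0)
    (ht2 : ∃ N : ℤ, ∀ i j : ℤ, (i < N ∨ j < N) → pmul p2 f i j = 0) :
    ∀ n : ℤ, (∑ᶠ i : ℤ, pmul p1 f i (n - i)) = ∑ᶠ i : ℤ, pmul p2 f i (n - i) := by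
  intro n
  obtain ⟨N1, hN1⟩ := ht1
  obtain ⟨N2, hN2⟩ := ht2
  have hfin1 := hasFiniteSupport_antidiagonal_of_truncated hN1 n
  have hfin2 := hasFiniteSupport_antidiagonal_of_truncated hN2 n
  simp only [pmul_antidiagonal] at hfin1 hfin2 ⊢
  simpa [h11, h21] using eval_one_smul_finsum_evalShift_comm hfin1 hfin2

/-- Independence of the defining polynomial (Proposition 2.8, abstracted):
if `p₁, p₂ ∈ 𝔽(q)[w]` satisfy `pₖ(1) = 1`, `pₖ(q^n) ≠ 0` for all `n ≥ 0`, and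
`pₖ(z/z1)·F(z1, z) ∈ Hom(L, L((z1, z)))` (joint lower truncation), then the
substitutions `z1 = z` agree:
`lim_{z1→z} p₁(z/z1) F(z1,z) = lim_{z1→z} p₂(z/z1) F(z1,z)` (the `n`-th
coefficient of the substituted series is the diagonal sum `Σ_{i+j=n}`). -/
theorem polynomial_independence
    (K : Type*) [Field K] [Algebra (RatFunc ℂ) K]
    (M : Type*) [AddCommGroup M] [Module K M]
    (f : ℤ → ℤ → M) (p1 p2 : Polynomial K)
    (h11 : p1.eval 1 = 1)
    (h12 : ∀ n : ℕ, p1.eval ((algebraMap (RatFunc ℂ) K qq) ^ n) ≠ 0)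
    (h21 : p2.eval 1 = 1)
    (h22 : ∀ n : ℕ, p2.eval ((algebraMap (RatFunc ℂ) K qq) ^ n) ≠ 0)
    (ht1 : ∃ N : ℤ, ∀ i j : ℤ, (i < N ∨ j < N) → pmul p1 f i j = 0)
    (ht2 : ∃ N : ℤ, ∀ i j : ℤ, (i < N ∨ j < N) → pmul p2 f i j = 0) :
    ∀ n : ℤ, (∑ᶠ i : ℤ, pmul p1 f i (n - i)) = ∑ᶠ i : ℤ, pmul p2 f i (n - i) :=
  polynomial_independence_general K M f p1 p2 h11 h21 ht1 ht2
end
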